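/- arXiv:1407.5236 — 2 statements merged into one kernel-verified Lean document; each statement's English description precedes it below -/
import Mathlib

section
/- Let t ≥ 0 be an integer and let r be a real number with r > t/2, such that every finite simple graph H with no K_{t+1} minor satisfies |E(H)| ≤ r·|V(H)|. Let s be the least integer greater than r(2r − t + 2). Let G be a finite simple graph with at least one vertex, such that K_{t+1} is not a minor of G. Then either some vertex of G has degree less than t, or there are two adjacent vertices of G both having degree less than s. -/
/-- `G` has a `K_n` minor: there are `n` nonempty, pairwise disjoint branch sets,
each inducing a connected subgraph, with an edge of `G` between any two of them. -/
def HasCompleteMinor {V : Type} (G : SimpleGraph V) (n : ℕ) : Prop :=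
  ∃ f : Fin n → Set V,
    (∀ i, (f i).Nonempty) ∧
    (∀ i, (G.induce (f i)).Connected) ∧
    (Pairwise fun i j => Disjoint (f i) (f j)) ∧
    (∀ i j, i ≠ j → ∃ x ∈ f i, ∃ y ∈ f j, G.Adj x y)

/-- Every vertex of `X` has at most `s` neighbours (w.r.t. `G`) inside `X`;
equivalently the subgraph of `G` induced on `X` has maximum degree at most `s`. -/
def MaxDegWithinLE {V : Type} (G : SimpleGraph V) (X : Set V) (s : ℕ) : Prop :=
  ∀ v ∈ X, ({u | u ∈ X ∧ G.Adj v u}).ncard ≤ s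


/-!
Suppose every vertex has degree at least `t` and no two adjacent vertices both have degree less
than `s`, so that the set `A` of vertices of degree less than `s` is independent; let `B` be the
rest. Process the vertices of `A` one at a time, contracting each `v ∈ A` onto a neighbour so as
to create an edge between two of its neighbours that are not yet adjacent. If there is no such
pair, the `≥ t` neighbours of `v` already form a clique in the minor built so far, and with `v`
they give a `K_{t+1}` minor. Hence `B` carries a `K_{t+1}`-minor-free graph with `|A|` edges, so
`|A| ≤ r|B|`. Counting degrees, `t|A| + s|B| ≤ 2|E(G)| ≤ 2r(|A| + |B|)`, and since `2r > t`
these two bounds force `s ≤ r(2r − t + 2)`.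
-/

open SimpleGraph

variable {V W X : Type}

structure IsMinorModel (G : SimpleGraph V) (H : SimpleGraph W) (φ : W → Set V) : Prop where
  connected : ∀ w, (G.induce (φ w)).Connected
  pairwiseDisjoint : Pairwise fun a b => Disjoint (φ a) (φ b)
  exists_adj : ∀ ⦃a b⦄, H.Adj a b → ∃ x ∈ φ a, ∃ y ∈ φ b, G.Adj x y

theorem hasCompleteMinor_iff {G : SimpleGraph V} {n : ℕ} :
    HasCompleteMinor G n ↔ ∃ φ, IsMinorModel G (⊤ : SimpleGraph (Fin n)) φ :=
  ⟨fun ⟨φ, _, hconn, hdisj, hadj⟩ => ⟨φ, hconn, hdisj, fun _ _ h => hadj _ _ h⟩,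
    fun ⟨φ, hφ⟩ => ⟨φ, fun i => Set.nonempty_coe_sort.mp (hφ.connected i).nonempty,
      hφ.connected, hφ.pairwiseDisjoint, fun _ _ h => hφ.exists_adj h⟩⟩

theorem connected_induce_singleton (G : SimpleGraph V) (v : V) :
    (G.induce ({v} : Set V)).Connected := by
  rw [induce_singleton_eq_top]
  exact connected_top

theorem connected_induce_biUnion {G : SimpleGraph V} {H : SimpleGraph W} {φ : W → Set V}
    {S : Set W} (hS : (H.induce S).Connected) (hφ : ∀ a ∈ S, (G.induce (φ a)).Connected)
    (hadj : ∀ a ∈ S, ∀ b ∈ S, H.Adj a b → ∃ x ∈ φ a, ∃ y ∈ φ b, G.Adj x y) :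
    (G.induce (⋃ a ∈ S, φ a)).Connected := by
  set U := ⋃ a ∈ S, φ a
  have hsub : ∀ a ∈ S, φ a ⊆ U := fun a ha => Set.subset_biUnion_of_mem ha
  have hwithin : ∀ a (ha : a ∈ S) x y (hx : x ∈ φ a) (hy : y ∈ φ a),
      (G.induce U).Reachable ⟨x, hsub a ha hx⟩ ⟨y, hsub a ha hy⟩ := fun a ha x y hx hy =>
    ((hφ a ha).preconnected ⟨x, hx⟩ ⟨y, hy⟩).map (G.induceHomOfLE (hsub a ha)).toHom
  choose ρ hρ using fun a : S => Set.nonempty_coe_sort.mp (hφ a a.2).nonempty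
  let ρU : S → U := fun a => ⟨ρ a, hsub a a.2 (hρ a)⟩
  have hstep : ∀ a b : S, (H.induce S).Adj a b → (G.induce U).Reachable (ρU a) (ρU b) := by
    intro a b hab
    obtain ⟨x, hx, y, hy, hxy⟩ := hadj a a.2 b b.2 hab
    have hxyU : (G.induce U).Adj ⟨x, hsub a a.2 hx⟩ ⟨y, hsub b b.2 hy⟩ := hxy
    exact (hwithin a a.2 _ x (hρ a) hx).trans
      (hxyU.reachable.trans (hwithin b b.2 y _ hy (hρ b)))
  have hreps : ∀ a b : S, (G.induce U).Reachable (ρU a) (ρU b) := fun a b => by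
    simp only [reachable_iff_reflTransGen] at hstep ⊢
    exact Relation.ReflTransGen.lift' ρU hstep _ _
      ((reachable_iff_reflTransGen a b).mp (hS.preconnected a b))
  obtain ⟨a₀⟩ := hS.nonempty
  rw [connected_iff_exists_forall_reachable]
  refine ⟨ρU a₀, fun ⟨x, hx⟩ => ?_⟩
  obtain ⟨a, ha, hxa⟩ := Set.mem_iUnion₂.mp hx
  exact (hreps a₀ ⟨a, ha⟩).trans (hwithin a ha _ x (hρ ⟨a, ha⟩) hxa)

namespace IsMinorModel

variable {G : SimpleGraph V} {H : SimpleGraph W} {φ : W → Set V}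

theorem comp {K : SimpleGraph X} {ψ : X → Set W} (hφ : IsMinorModel G H φ)
    (hψ : IsMinorModel H K ψ) : IsMinorModel G K (fun k => ⋃ a ∈ ψ k, φ a) where
  connected k := connected_induce_biUnion (hψ.connected k) (fun a _ => hφ.connected a)
    (fun _ _ _ _ hab => hφ.exists_adj hab)
  pairwiseDisjoint i j hij := by
    refine Set.disjoint_iUnion₂_left.mpr fun a ha =>
      Set.disjoint_iUnion₂_right.mpr fun b hb => ?_
    exact hφ.pairwiseDisjoint fun hab => (hψ.pairwiseDisjoint hij).ne_of_mem ha hb hab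
  exists_adj i j hij := by
    obtain ⟨a, ha, b, hb, hab⟩ := hψ.exists_adj hij
    obtain ⟨x, hx, y, hy, hxy⟩ := hφ.exists_adj hab
    exact ⟨x, Set.mem_biUnion ha hx, y, Set.mem_biUnion hb hy, hxy⟩

theorem hasCompleteMinor_succ (hφ : IsMinorModel G H φ) {t : ℕ} {u : Fin t → W}
    (hu : Pairwise fun i j => H.Adj (u i) (u j)) {v : V} (hv : ∀ w, v ∉ φ w)
    (hvu : ∀ i, ∃ x ∈ φ (u i), G.Adj v x) : HasCompleteMinor G (t + 1) := by
  refine hasCompleteMinor_iff.mpr ⟨Fin.cons {v} (φ ∘ u), ⟨fun i => ?_, fun i j hij => ?_,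
    fun i j hij => ?_⟩⟩
  · cases i using Fin.cases with
    | zero => exact connected_induce_singleton G v
    | succ i => exact hφ.connected (u i)
  · cases i using Fin.cases <;> cases j using Fin.cases
    · exact absurd rfl hij
    · exact Set.disjoint_singleton_left.mpr (hv _)
    · exact Set.disjoint_singleton_right.mpr (hv _)
    · exact hφ.pairwiseDisjoint (hu fun h => hij (congrArg _ h)).ne
  · cases i using Fin.cases <;> cases j using Fin.cases
    · exact absurd rfl hij
    · obtain ⟨x, hx, hvx⟩ := hvu _
      exact ⟨v, rfl, x, hx, hvx⟩
    · obtain ⟨x, hx, hvx⟩ := hvu _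
      exact ⟨x, hx, v, rfl, hvx.symm⟩
    · exact hφ.exists_adj (hu fun h => hij (congrArg _ h))

theorem sup_edge [DecidableEq W] (hφ : IsMinorModel G H φ) {v : V} (hv : ∀ w, v ∉ φ w)
    {a b : W} {x y : V} (hx : x ∈ φ a) (hy : y ∈ φ b) (hvx : G.Adj v x) (hvy : G.Adj v y) :
    IsMinorModel G (H ⊔ edge a b) (Function.update φ a (insert v (φ a))) := by
  set φ' := Function.update φ a (insert v (φ a))
  have hφa : φ' a = insert v (φ a) := Function.update_self ..
  have hφne : ∀ w ≠ a, φ' w = φ w := fun w hw => Function.update_of_ne hw ..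
  have hsub : ∀ w, φ w ⊆ φ' w := fun w => by
    rcases eq_or_ne w a with rfl | hw
    · exact hφa ▸ Set.subset_insert v (φ w)
    · exact (hφne w hw).ge
  refine ⟨fun w => ?_, fun i j hij => ?_, fun i j hij => ?_⟩
  · rcases eq_or_ne w a with rfl | hw
    · rw [hφa, Set.insert_eq]
      exact connected_induce_union (connected_induce_singleton G v).preconnected
        (hφ.connected w).preconnected (Set.mem_singleton v) hx hvx
    · exact hφne w hw ▸ hφ.connected w
  · rcases eq_or_ne i a with rfl | hi
    · rw [hφa, hφne j (Ne.symm hij)]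
      exact Set.disjoint_insert_left.mpr ⟨hv j, hφ.pairwiseDisjoint hij⟩
    rcases eq_or_ne j a with rfl | hj
    · rw [hφa, hφne i hi]
      exact Set.disjoint_insert_right.mpr ⟨hv i, hφ.pairwiseDisjoint hij⟩
    · rw [hφne i hi, hφne j hj]
      exact hφ.pairwiseDisjoint hij
  · rcases (sup_adj _ _ _ _).mp hij with hH | hab
    · obtain ⟨x', hx', y', hy', hxy'⟩ := hφ.exists_adj hH
      exact ⟨x', hsub i hx', y', hsub j hy', hxy'⟩
    · have hva : v ∈ φ' a := hφa ▸ Set.mem_insert v (φ a)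
      rcases (edge_adj ..).mp hab with ⟨⟨rfl, rfl⟩ | ⟨rfl, rfl⟩, -⟩
      · exact ⟨v, hva, y, hsub j hy, hvy⟩
      · exact ⟨y, hsub i hy, v, hva, hvy.symm⟩

theorem hasCompleteMinor_or_exists_not_adj {B : Set V} {H : SimpleGraph B} {φ : B → Set V}
    (hφ : IsMinorModel G H φ) (hmem : ∀ b, ↑b ∈ φ b) {v : V} (hv : ∀ b, v ∉ φ b)
    (hN : G.neighborSet v ⊆ B) (hB : B.Finite) {t : ℕ} (hdeg : t ≤ (G.neighborSet v).ncard) :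
    HasCompleteMinor G (t + 1) ∨
      ∃ a b : B, G.Adj v a ∧ G.Adj v b ∧ a ≠ b ∧ ¬H.Adj a b := by
  by_contra! ⟨hK, hclique⟩
  have := (hB.subset hN).fintype
  obtain ⟨u⟩ : Nonempty (Fin t ↪ G.neighborSet v) := Function.Embedding.nonempty_of_card_le
    (by rwa [Fintype.card_fin, ← Nat.card_eq_fintype_card, Nat.card_coe_set_eq])
  let uB : Fin t → B := fun i => ⟨u i, hN (u i).2⟩
  refine hK (hφ.hasCompleteMinor_succ (u := uB) (fun i j hij => ?_) hv
    fun i => ⟨u i, hmem (uB i), (u i).2⟩)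
  exact hclique _ _ (u i).2 (u j).2
    fun h => hij (u.injective (Subtype.ext (congrArg Subtype.val h :)))

end IsMinorModel

theorem HasCompleteMinor.of_isMinorModel {G : SimpleGraph V} {H : SimpleGraph W}
    {φ : W → Set V} {n : ℕ} (h : HasCompleteMinor H n) (hφ : IsMinorModel G H φ) :
    HasCompleteMinor G n :=
  have ⟨_, hψ⟩ := hasCompleteMinor_iff.mp h
  hasCompleteMinor_iff.mpr ⟨_, hφ.comp hψ⟩

theorem natCard_edgeSet_sup_edge [Finite W] {H : SimpleGraph W} {a b : W} (hab : ¬H.Adj a b)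
    (hne : a ≠ b) : Nat.card (H ⊔ edge a b).edgeSet = Nat.card H.edgeSet + 1 := by
  rw [edgeSet_sup, edgeSet_edge_of_ne hne, Set.union_singleton, Nat.card_coe_set_eq,
    Set.ncard_insert_of_notMem (by simpa using hab) (Set.toFinite _), Nat.card_coe_set_eq]

theorem hasCompleteMinor_or_exists_minorModel (G : SimpleGraph V) {B : Set V} (hB : B.Finite)
    (t : ℕ) (S : Finset V) (hSB : Disjoint (S : Set V) B)
    (hN : ∀ v ∈ S, G.neighborSet v ⊆ B) (hdeg : ∀ v ∈ S, t ≤ (G.neighborSet v).ncard) :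
    HasCompleteMinor G (t + 1) ∨ ∃ (H : SimpleGraph B) (φ : B → Set V),
      IsMinorModel G H φ ∧ (∀ b, ↑b ∈ φ b) ∧ (∀ b, φ b ⊆ B ∪ S) ∧
        Nat.card H.edgeSet = S.card := by
  classical
  induction S using Finset.induction_on with
  | empty =>
    refine Or.inr ⟨⊥, fun b => {(b : V)}, ⟨fun b => connected_induce_singleton G b,
      fun a b hab => Set.disjoint_singleton.mpr (Subtype.coe_injective.ne hab),
      fun _ _ h => h.elim⟩, fun b => Set.mem_singleton _, fun b => by simp, by simp⟩
  | insert v S hvS ih =>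
    simp only [Finset.mem_insert, forall_eq_or_imp] at hN hdeg
    rw [Finset.coe_insert, Set.disjoint_insert_left] at hSB
    obtain hK | ⟨H, φ, hφ, hmem, hsub, hcard⟩ := ih hSB.2 hN.2 hdeg.2
    · exact Or.inl hK
    have hv : ∀ b, v ∉ φ b := fun b hb => (hsub b hb).elim hSB.1 hvS
    obtain hK | ⟨a, b, hva, hvb, hab, hHab⟩ :=
      hφ.hasCompleteMinor_or_exists_not_adj hmem hv hN.1 hB hdeg.1
    · exact Or.inl hK
    refine Or.inr ⟨H ⊔ edge a b, _, hφ.sup_edge hv (hmem a) (hmem b) hva hvb, fun c => ?_,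
      fun c => ?_, ?_⟩
    · rw [Function.update_apply]
      split_ifs with hc
      · exact hc ▸ Set.mem_insert_of_mem v (hmem c)
      · exact hmem c
    · have hgrow : B ∪ S ⊆ B ∪ ↑(insert v S) :=
        Set.union_subset_union_right _ (Finset.coe_subset.mpr (Finset.subset_insert v S))
      rw [Function.update_apply]
      split_ifs with hc
      · exact Set.insert_subset (Or.inr (Finset.mem_coe.mpr (Finset.mem_insert_self v S)))
          ((hsub a).trans hgrow)
      · exact (hsub c).trans hgrow
    · have := hB.to_subtype
      rw [natCard_edgeSet_sup_edge hHab hab, hcard, Finset.card_insert_of_notMem hvS]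

theorem sum_ncard_neighborSet [Fintype V] (G : SimpleGraph V) :
    ∑ v, (G.neighborSet v).ncard = 2 * Nat.card G.edgeSet := by
  classical
  simp_rw [← Nat.card_coe_set_eq, Nat.card_eq_fintype_card, card_neighborSet_eq_degree,
    sum_degrees_eq_twice_card_edges, edgeFinset_card]

theorem mul_card_add_mul_card_compl_le_sum [Fintype V] [DecidableEq V] (f : V → ℝ)
    (B : Finset V) {a b : ℝ} (hB : ∀ v ∈ B, b ≤ f v) (hBc : ∀ v ∈ Bᶜ, a ≤ f v) :
    b * B.card + a * Bᶜ.card ≤ ∑ v, f v := by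
  rw [← Finset.sum_add_sum_compl B f, mul_comm b, mul_comm a, ← nsmul_eq_mul, ← nsmul_eq_mul]
  exact add_le_add (Finset.card_nsmul_le_sum B f b hB) (Finset.card_nsmul_le_sum Bᶜ f a hBc)

theorem le_of_edge_count_bounds {r t s a b : ℝ} (hrt : t < 2 * r) (hn : 0 < b + a)
    (hb : 0 ≤ b) (hA : a ≤ r * b) (hdeg : s * b + t * a ≤ 2 * r * (b + a)) :
    s ≤ r * (2 * r - t + 2) := by
  have hb : 0 < b := hb.lt_of_ne fun h => by subst h; linarith
  nlinarith [mul_le_mul_of_nonneg_left hA (sub_nonneg.mpr hrt.le)]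

theorem low_degree_vertices_general (t : ℕ) (r : ℝ) (hrt : r > t / 2)
    (hR : ∀ (W : Type) [Fintype W] (H : SimpleGraph W),
      ¬ HasCompleteMinor H (t + 1) → (Nat.card H.edgeSet : ℝ) ≤ r * Fintype.card W)
    (s : ℤ) (hs : r * (2 * r - t + 2) < s)
    (V : Type) [Fintype V] [Nonempty V] (G : SimpleGraph V)
    (hG : ¬ HasCompleteMinor G (t + 1)) :
    (∃ v : V, (G.neighborSet v).ncard < t) ∨
    (∃ x y : V, G.Adj x y ∧ ((G.neighborSet x).ncard : ℤ) < s ∧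
      ((G.neighborSet y).ncard : ℤ) < s) := by
  classical
  by_contra! ⟨hdeg, hlow⟩
  let B : Finset V := {v | s ≤ ((G.neighborSet v).ncard : ℤ)}
  have hB : ∀ v, v ∈ B ↔ s ≤ ((G.neighborSet v).ncard : ℤ) := by simp [B]
  have hN : ∀ v ∈ Bᶜ, G.neighborSet v ⊆ B := fun v hv w hvw =>
    (hB w).mpr (hlow v w hvw (not_le.mp ((hB v).not.mp (Finset.mem_compl.mp hv))))
  obtain ⟨H, φ, hφ, -, -, hcard⟩ := (hasCompleteMinor_or_exists_minorModel G B.finite_toSet t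
    Bᶜ (by simpa using disjoint_compl_left) hN fun v _ => hdeg v).resolve_left hG
  have hHB : (Bᶜ.card : ℝ) ≤ r * B.card := by
    have := hR _ H fun hH => hG (hH.of_isMinorModel hφ)
    rwa [hcard, ← Nat.card_eq_fintype_card, Nat.card_coe_set_eq, Set.ncard_coe_finset] at this
  have hGB : (s : ℝ) * B.card + t * Bᶜ.card ≤ 2 * r * (B.card + Bᶜ.card) := by
    have hsum := mul_card_add_mul_card_compl_le_sum (fun v => ((G.neighborSet v).ncard : ℝ)) B
      (a := t) (b := s) (fun v hv => by exact_mod_cast (hB v).mp hv)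
      fun v _ => by exact_mod_cast hdeg v
    have hE := hR V G hG
    rw [← Finset.card_add_card_compl B] at hE
    push_cast [← Nat.cast_sum, sum_ncard_neighborSet] at hsum hE
    linarith
  have hV : (0 : ℝ) < B.card + Bᶜ.card := by
    exact_mod_cast (Finset.card_add_card_compl B).symm ▸ Fintype.card_pos
  exact hs.not_ge (le_of_edge_count_bounds (by linarith [(div_lt_iff₀ two_pos).mp hrt]) hV
    (Nat.cast_nonneg _) hHB hGB)

/-- Given `r > t/2` such that every finite graph with no `K_{t+1}` minor has at most
`r·|V|` edges, and `s` the least integer greater than `r(2r − t + 2)`: in every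
non-null finite graph `G` with no `K_{t+1}` minor, either some vertex has degree less
than `t`, or two adjacent vertices both have degree less than `s`. -/
theorem low_degree_vertices (t : ℕ) (r : ℝ) (hrt : r > t / 2)
    (hR : ∀ (W : Type) [Fintype W] (H : SimpleGraph W),
      ¬ HasCompleteMinor H (t + 1) → (Nat.card H.edgeSet : ℝ) ≤ r * Fintype.card W)
    (s : ℤ) (hs : r * (2 * r - t + 2) < s)
    (hsmin : ∀ m : ℤ, r * (2 * r - t + 2) < m → s ≤ m)
    (V : Type) [Fintype V] [Nonempty V] (G : SimpleGraph V)
    (hG : ¬ HasCompleteMinor G (t + 1)) :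
    (∃ v : V, (G.neighborSet v).ncard < t) ∨
    (∃ x y : V, G.Adj x y ∧ ((G.neighborSet x).ncard : ℤ) < s ∧
      ((G.neighborSet y).ncard : ℤ) < s) :=
  low_degree_vertices_general t r hrt hR s hs V G hG
end

section
/- Let s ≥ 0 and t ≥ 2 be integers, and let H be a finite simple graph such that there is no partition of V(H) into t − 2 sets each inducing a subgraph of H of maximum degree at most s. Let G be the graph obtained from the disjoint union of s + 1 copies H_1, …, H_{s+1} of H by adding one new vertex v adjacent to every other vertex. Then there is no partition of V(G) into t − 1 sets X_1, …, X_{t−1} such that for each i with 1 ≤ i ≤ t − 1 the subgraph of G induced on X_i has maximum degree at most s. -/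
open Function

def IsDefectivePartition {V : Type} (G : SimpleGraph V) (s : ℕ) {n : ℕ}
    (X : Fin n → Set V) : Prop :=
  (Pairwise fun i j => Disjoint (X i) (X j)) ∧ (⋃ i, X i) = Set.univ ∧
    ∀ i, MaxDegWithinLE G (X i) s

theorem exists_disjoint_of_ncard_lt {V ι : Type*} [Finite V] {S : Set V} {A : ι → Set V}
    (hA : Pairwise (Disjoint on A)) (hS : S.ncard < Nat.card ι) : ∃ i, Disjoint S (A i) := by
  by_contra! h
  choose g hgS hgA using fun i => Set.not_disjoint_iff.mp (h i)
  have hg : Injective fun i => (⟨g i, hgS i⟩ : S) := fun i j hij => by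
    by_contra hne
    have hgij : g i = g j := congrArg Subtype.val hij
    exact Set.disjoint_left.mp (hA hne) (hgA i) (hgij ▸ hgA j)
  have := Nat.card_le_card_of_injective _ hg
  rw [Nat.card_coe_set_eq] at this
  omega

theorem MaxDegWithinLE.comap {V W : Type} [Finite V] {G : SimpleGraph V} {H : SimpleGraph W}
    {X : Set V} {s : ℕ} (hX : MaxDegWithinLE G X s) (f : H →g G) (hf : Injective f) :
    MaxDegWithinLE H (f ⁻¹' X) s := by
  intro x hx
  calc {u | u ∈ f ⁻¹' X ∧ H.Adj x u}.ncard
      = (f '' {u | u ∈ f ⁻¹' X ∧ H.Adj x u}).ncard := (Set.ncard_image_of_injective _ hf).symm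
    _ ≤ {u | u ∈ X ∧ G.Adj (f x) u}.ncard := by
        refine Set.ncard_le_ncard ?_ (Set.toFinite _)
        rintro _ ⟨u, ⟨huX, hxu⟩, rfl⟩
        exact ⟨huX, f.map_adj hxu⟩
    _ ≤ s := hX (f x) hx

theorem IsDefectivePartition.comap_succAbove {V W : Type} [Finite V] {G : SimpleGraph V}
    {H : SimpleGraph W} {s n : ℕ} {X : Fin (n + 1) → Set V} (hX : IsDefectivePartition G s X)
    (f : H →g G) (hf : Injective f) (i₀ : Fin (n + 1)) (hi₀ : ∀ x, f x ∉ X i₀) :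
    IsDefectivePartition H s fun j => f ⁻¹' X (i₀.succAbove j) := by
  obtain ⟨hdisj, hcover, hdeg⟩ := hX
  refine ⟨fun i j hij => ?_, ?_, fun j => (hdeg _).comap f hf⟩
  · exact (hdisj (Fin.succAbove_right_injective.ne hij)).preimage f
  · refine Set.eq_univ_of_forall fun x => ?_
    obtain ⟨i, hi⟩ := Set.mem_iUnion.mp (hcover ▸ Set.mem_univ (f x))
    have hne : i ≠ i₀ := by rintro rfl; exact hi₀ x hi
    obtain ⟨j, rfl⟩ := Fin.exists_succAbove_eq hne
    exact Set.mem_iUnion.mpr ⟨j, hi⟩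

theorem exists_copy_disjoint_of_apex_mem {W : Type} [Finite W] {s : ℕ}
    {G : SimpleGraph (Option (Fin (s + 1) × W))} (hnone : ∀ p, G.Adj none (some p))
    {X : Set (Option (Fin (s + 1) × W))} (hX : MaxDegWithinLE G X s) (hnoneX : none ∈ X) :
    ∃ k : Fin (s + 1), ∀ x, some (k, x) ∉ X := by
  have hcopies :
      Pairwise (Disjoint on fun k : Fin (s + 1) => Set.range fun x : W => some (k, x)) :=
    fun i j hij => Set.disjoint_left.mpr <| by
      rintro _ ⟨x, rfl⟩ ⟨y, hxy⟩
      exact hij (congrArg Prod.fst (Option.some.inj hxy)).symm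
  obtain ⟨k, hk⟩ := exists_disjoint_of_ncard_lt hcopies
    ((hX none hnoneX).trans_lt (by simp))
  exact ⟨k, fun x hx => Set.disjoint_left.mp hk ⟨hx, hnone (k, x)⟩ ⟨x, rfl⟩⟩

theorem apex_no_defective_colouring_general (s t : ℕ) (ht : 2 ≤ t)
    (W : Type) [Fintype W] (H : SimpleGraph W)
    (hH : ¬ ∃ Y : Fin (t - 2) → Set W,
      (Pairwise fun i j => Disjoint (Y i) (Y j)) ∧
      (⋃ i, Y i) = Set.univ ∧
      ∀ i, MaxDegWithinLE H (Y i) s)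
    (G : SimpleGraph (Option (Fin (s + 1) × W)))
    (hsame : ∀ (i : Fin (s + 1)) (x y : W),
      G.Adj (some (i, x)) (some (i, y)) ↔ H.Adj x y)
    (hnone : ∀ p : Fin (s + 1) × W, G.Adj none (some p)) :
    ¬ ∃ X : Fin (t - 1) → Set (Option (Fin (s + 1) × W)),
      (Pairwise fun i j => Disjoint (X i) (X j)) ∧
      (⋃ i, X i) = Set.univ ∧
      ∀ i, MaxDegWithinLE G (X i) s := by
  obtain ⟨n, rfl⟩ : ∃ n, t = n + 2 := ⟨t - 2, by omega⟩
  rintro ⟨X, hX⟩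
  obtain ⟨i₀, hi₀⟩ := Set.mem_iUnion.mp (hX.2.1 ▸ Set.mem_univ none)
  obtain ⟨k, hk⟩ := exists_copy_disjoint_of_apex_mem hnone (hX.2.2 i₀) hi₀
  let copy : H →g G := ⟨fun x => some (k, x), fun hxy => (hsame k _ _).mpr hxy⟩
  have hcopy : Injective copy := fun x y hxy => congrArg Prod.snd (Option.some.inj hxy)
  exact hH ⟨_, IsDefectivePartition.comap_succAbove hX copy hcopy i₀ hk⟩

/-- Let `H` admit no partition of its vertex set into `t − 2` sets each inducing a
subgraph of maximum degree at most `s`, and let `G` be obtained from `s + 1` disjoint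
copies of `H` by adding a new vertex (here `none`) adjacent to every other vertex.
Then `G` admits no partition of its vertex set into `t − 1` sets each inducing a
subgraph of maximum degree at most `s`. -/
theorem apex_no_defective_colouring (s t : ℕ) (ht : 2 ≤ t)
    (W : Type) [Fintype W] (H : SimpleGraph W)
    (hH : ¬ ∃ Y : Fin (t - 2) → Set W,
      (Pairwise fun i j => Disjoint (Y i) (Y j)) ∧
      (⋃ i, Y i) = Set.univ ∧
      ∀ i, MaxDegWithinLE H (Y i) s)
    (G : SimpleGraph (Option (Fin (s + 1) × W)))
    (hsame : ∀ (i : Fin (s + 1)) (x y : W),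
      G.Adj (some (i, x)) (some (i, y)) ↔ H.Adj x y)
    (hdiff : ∀ (i j : Fin (s + 1)) (x y : W), i ≠ j →
      ¬ G.Adj (some (i, x)) (some (j, y)))
    (hnone : ∀ p : Fin (s + 1) × W, G.Adj none (some p)) :
    ¬ ∃ X : Fin (t - 1) → Set (Option (Fin (s + 1) × W)),
      (Pairwise fun i j => Disjoint (X i) (X j)) ∧
      (⋃ i, X i) = Set.univ ∧
      ∀ i, MaxDegWithinLE G (X i) s :=
  apex_no_defective_colouring_general s t ht W H hH G hsame hnone
end
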